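/- Let DG = (V, E) and DG' = (V', E') be two dynamic graphs with node features X and X'. Let l be a node labeling function satisfying, for all u ∈ V and v ∈ V', l(u) = l(v) if and only if X_u = X'_v. Run the 1-DWL test on both graphs initialized with l (with an injective hash), and run the same DyGNN (same AGG, UPDATE, σ and node features X, X') on both graphs. Then for every time t, every iteration j ≥ 0, every u ∈ V and every v ∈ V': if the 1-DWL colors satisfy c^{(j)}_t(u) = c^{(j)}_t(v), then the DyGNN embeddings satisfy h^{(j)}_t(u) = h^{(j)}_t(v). In particular, the expressive power of any such DyGNN is upper bounded by the 1-DWL test. -/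

import Mathlib

/-- Historical interaction sequence `A^{<t}_{u,v}`: the sorted list of all
timestamps `t' < t` with `(u,v,t') ∈ E` or `(v,u,t') ∈ E`. -/
noncomputable def hist {V : Type} [DecidableEq V] (E : Multiset (V × V × ℝ)) (t : ℝ)
    (u v : V) : List ℝ :=
  ((E.filter fun e => ((e.1 = u ∧ e.2.1 = v) ∨ (e.1 = v ∧ e.2.1 = u)) ∧ e.2.2 < t).map
    fun e => e.2.2).sort (· ≤ ·)

/-- Historical neighborhood `N(u,t)`: the multiset of pairs `(w, t')` with `t' < t`
and `(u,w,t') ∈ E` or `(w,u,t') ∈ E` (with multiplicity). -/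
noncomputable def nbhd {V : Type} [DecidableEq V] (E : Multiset (V × V × ℝ)) (t : ℝ)
    (u : V) : Multiset (V × ℝ) :=
  (E.filter fun e => (e.1 = u ∨ e.2.1 = u) ∧ e.2.2 < t).map
    fun e => if e.1 = u then (e.2.1, e.2.2) else (e.1, e.2.2)

/-- 1-DWL colors at time `t`: `c⁰ = l` and
`c^{j+1}(u) = HASH (c^j(u), {{ (c^j(v), A^{<t}_{u,v}) : (v,t') ∈ N(u,t) }})`. -/
noncomputable def dwl1 {V : Type} [DecidableEq V] {C : Type}
    (E : Multiset (V × V × ℝ)) (t : ℝ) (l : V → C)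
    (hash : C × Multiset (C × List ℝ) → C) : ℕ → V → C
  | 0 => l
  | j + 1 => fun u =>
      hash (dwl1 E t l hash j u,
        (nbhd E t u).map fun p => (dwl1 E t l hash j p.1, hist E t u p.1))

/-- Message-passing DyGNN temporal node embeddings at time `t`:
`h⁰(u) = X_u` and
`h^{l+1}(u) = UPDATE (h^l(u), AGG {{ (h^l(w), σ(t - t')) : (w,t') ∈ N(u,t) }})`. -/
noncomputable def dygnn {V : Type} [DecidableEq V] {dN dT dA : ℕ}
    (E : Multiset (V × V × ℝ)) (t : ℝ) (X : V → Fin dN → ℝ)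
    (σ : ℝ → Fin dT → ℝ)
    (AGG : Multiset ((Fin dN → ℝ) × (Fin dT → ℝ)) → Fin dA → ℝ)
    (UPDATE : (Fin dN → ℝ) × (Fin dA → ℝ) → Fin dN → ℝ) : ℕ → V → Fin dN → ℝ
  | 0 => X
  | l + 1 => fun u =>
      UPDATE (dygnn E t X σ AGG UPDATE l u,
        AGG ((nbhd E t u).map fun p => (dygnn E t X σ AGG UPDATE l p.1, σ (t - p.2))))

/-! Induction on the layer. Injectivity of the hash splits equal colours at layer `j + 1` into
equal colours at layer `j` and equal multisets `{{(c w, A_{u,w}) : (w, t') ∈ N(u,t)}}`. A neighbour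
`w` occurs in `N(u,t)` once per timestamp of `A_{u,w}`, so the pair `(c w, A_{u,w})` occurs exactly
`|A_{u,w}| ≥ 1` times; dividing out these multiplicities recovers the multiset of pairs over the
distinct neighbours, and with it the timestamped multiset `{{(c w, A_{u,w}, t')}}`. The induction
hypothesis turns equal colours into equal embeddings, so both graphs feed `AGG` the same multiset. -/

namespace Multiset

variable {α β γ δ : Type*}

theorem bind_dedup_map_filter_eq [DecidableEq α] [DecidableEq β] (S : Multiset α) (f : α → β) :
    (S.map f).dedup.bind (fun b => S.filter (f · = b)) = S := by
  ext a
  rw [count_bind, ← toFinset_val, ← Finset.sum_eq_multiset_sum]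
  simp only [count_filter, Finset.sum_ite_eq]
  split_ifs with ha
  · rfl
  · exact (count_eq_zero.2 fun h => ha (mem_toFinset.2 (mem_map_of_mem f h))).symm

theorem count_bind_replicate [DecidableEq α] (P : Multiset α) (n : α → ℕ) (a : α) :
    count a (P.bind fun x => replicate (n x) x) = n a * count a P := by
  induction P using Multiset.induction with
  | empty => simp
  | cons x P ih =>
    rcases eq_or_ne x a with rfl | hxa
    · simp [ih, mul_add, add_comm]
    · simp [ih, count_replicate, hxa, hxa.symm]

theorem eq_of_bind_replicate_eq [DecidableEq α] {P Q : Multiset α} {n : α → ℕ}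
    (hP : ∀ x ∈ P, n x ≠ 0) (hQ : ∀ x ∈ Q, n x ≠ 0)
    (h : P.bind (fun x => replicate (n x) x) = Q.bind (fun x => replicate (n x) x)) :
    P = Q := by
  ext a
  have hcount := congrArg (count a) h
  rw [count_bind_replicate, count_bind_replicate] at hcount
  by_cases ha : n a = 0
  · rw [count_eq_zero.2 fun h => hP a h ha, count_eq_zero.2 fun h => hQ a h ha]
  · exact Nat.eq_of_mul_eq_mul_left (Nat.pos_of_ne_zero ha) hcount

theorem map_eq_map_of_map_eq_map {s : Multiset α} {t : Multiset β} {f : α → γ} {f' : β → γ}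
    {g : α → δ} {g' : β → δ} (h : s.map f = t.map f')
    (hfg : ∀ a ∈ s, ∀ b ∈ t, f a = f' b → g a = g' b) : s.map g = t.map g' := by
  rw [← rel_eq, rel_map] at h ⊢
  exact h.mono hfg

end Multiset

section DynamicGraph

variable {V : Type} [DecidableEq V] (E : Multiset (V × V × ℝ)) (t : ℝ)

theorem filter_nbhd_fst_eq (u w : V) :
    (nbhd E t u).filter (·.1 = w) = (hist E t u w : Multiset ℝ).map (w, ·) := by
  unfold nbhd hist
  rw [Multiset.sort_eq, Multiset.filter_map, Multiset.map_map, Multiset.filter_filter]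
  refine Multiset.map_congr (Multiset.filter_congr fun e _ => ?_) fun ⟨a, b, s⟩ he => ?_
  · by_cases h : e.1 = u <;> aesop
  · obtain ⟨-, hw, -⟩ := Multiset.mem_filter.1 he
    by_cases h : a = u <;> aesop

noncomputable def histNeighbors (u : V) : Multiset V :=
  ((nbhd E t u).map Prod.fst).dedup

theorem bind_histNeighbors_eq_nbhd (u : V) :
    (histNeighbors E t u).bind (fun w => (hist E t u w : Multiset ℝ).map (w, ·)) = nbhd E t u := by
  simp only [histNeighbors, ← filter_nbhd_fst_eq]
  exact Multiset.bind_dedup_map_filter_eq _ _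

theorem hist_ne_nil_of_mem_histNeighbors {u w : V} (hw : w ∈ histNeighbors E t u) :
    hist E t u w ≠ [] := by
  obtain ⟨p, hp, rfl⟩ := Multiset.mem_map.1 (Multiset.mem_dedup.1 hw)
  intro h
  have hp' : p ∈ (nbhd E t u).filter (·.1 = p.1) := Multiset.mem_filter.2 ⟨hp, rfl⟩
  simp [filter_nbhd_fst_eq, h] at hp'

variable {C : Type} (c : V → C)

theorem map_nbhd_eq_bind_replicate (u : V) :
    (nbhd E t u).map (fun p => (c p.1, hist E t u p.1)) =
      ((histNeighbors E t u).map fun w => (c w, hist E t u w)).bind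
        fun x => Multiset.replicate x.2.length x := by
  conv_lhs => rw [← bind_histNeighbors_eq_nbhd E t u]
  rw [Multiset.map_bind, Multiset.bind_map]
  simp only [Multiset.map_map, Function.comp_def, Multiset.map_const', Multiset.coe_card]

theorem map_nbhd_timed_eq_bind (u : V) :
    (nbhd E t u).map (fun p => ((c p.1, hist E t u p.1), p.2)) =
      ((histNeighbors E t u).map fun w => (c w, hist E t u w)).bind
        fun x => (x.2 : Multiset ℝ).map (x, ·) := by
  conv_lhs => rw [← bind_histNeighbors_eq_nbhd E t u]
  rw [Multiset.map_bind, Multiset.bind_map]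
  simp only [Multiset.map_map, Function.comp_def]

end DynamicGraph

theorem map_nbhd_timed_eq_of_map_nbhd_eq {V V' C : Type} [DecidableEq V] [DecidableEq V']
    {E : Multiset (V × V × ℝ)} {E' : Multiset (V' × V' × ℝ)} {t : ℝ} {u : V} {v : V'}
    {c : V → C} {c' : V' → C}
    (h : (nbhd E t u).map (fun p => (c p.1, hist E t u p.1)) =
      (nbhd E' t v).map (fun p => (c' p.1, hist E' t v p.1))) :
    (nbhd E t u).map (fun p => ((c p.1, hist E t u p.1), p.2)) =
      (nbhd E' t v).map (fun p => ((c' p.1, hist E' t v p.1), p.2)) := by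
  classical
  rw [map_nbhd_eq_bind_replicate, map_nbhd_eq_bind_replicate] at h
  rw [map_nbhd_timed_eq_bind, map_nbhd_timed_eq_bind,
    Multiset.eq_of_bind_replicate_eq ?_ ?_ h]
  all_goals
    simp only [Multiset.mem_map, forall_exists_index, and_imp]
    rintro _ w hw rfl
    simpa using hist_ne_nil_of_mem_histNeighbors _ _ hw

/-- Proposition 2: the expressive power of any message-passing
DyGNN is upper bounded by the 1-DWL test. Given two dynamic graphs with node
features `X`, `X'` and a node labeling `l`/`l'` with `l u = l' v ↔ X_u = X'_v`,
run the 1-DWL test with an injective hash and the same DyGNN on both graphs;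
then equal 1-DWL colors at time `t` and iteration `j` imply equal DyGNN
embeddings at time `t` and layer `j`. -/
theorem dygnn_bounded_by_dwl1 {V V' : Type} [DecidableEq V] [DecidableEq V']
    {C : Type} {dN dT dA : ℕ}
    (E : Multiset (V × V × ℝ)) (E' : Multiset (V' × V' × ℝ))
    (X : V → Fin dN → ℝ) (X' : V' → Fin dN → ℝ)
    (l : V → C) (l' : V' → C)
    (hl : ∀ (u : V) (v : V'), l u = l' v ↔ X u = X' v)
    (hash : C × Multiset (C × List ℝ) → C) (hash_inj : Function.Injective hash)
    (σ : ℝ → Fin dT → ℝ)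
    (AGG : Multiset ((Fin dN → ℝ) × (Fin dT → ℝ)) → Fin dA → ℝ)
    (UPDATE : (Fin dN → ℝ) × (Fin dA → ℝ) → Fin dN → ℝ) :
    ∀ (t : ℝ) (j : ℕ) (u : V) (v : V'),
      dwl1 E t l hash j u = dwl1 E' t l' hash j v →
      dygnn E t X σ AGG UPDATE j u = dygnn E' t X' σ AGG UPDATE j v := by
  intro t j
  induction j with
  | zero => exact fun u v => (hl u v).1
  | succ j ih =>
    intro u v h
    obtain ⟨hself, hmsg⟩ := Prod.mk.inj (hash_inj h)
    have hagg := Multiset.map_eq_map_of_map_eq_map (map_nbhd_timed_eq_of_map_nbhd_eq hmsg)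
      (g := fun p => (dygnn E t X σ AGG UPDATE j p.1, σ (t - p.2)))
      (g' := fun p => (dygnn E' t X' σ AGG UPDATE j p.1, σ (t - p.2)))
      fun p _ q _ hpq => by
        simp only [Prod.mk.injEq] at hpq
        obtain ⟨⟨hc, -⟩, hs⟩ := hpq
        rw [ih p.1 q.1 hc, hs]
    simp only [dygnn, ih u v hself, hagg]
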